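/- Let B be a type and T a predicate on B*. T is productive if and only if there exists a predicate U on B* with U ⊆ T such that U is a spread. Dually, T is inductively barred if and only if every predicate U on B* with T ⊆ U is barricaded. -/

import Mathlib

namespace BarInd

variable {A B : Type*}

/-- `u` is an initial prefix of the infinite sequence `α`. -/
def SeqPrefix (u : List B) (α : ℕ → B) : Prop := ∀ i : Fin u.length, u.get i = α i

/-- `T` is a tree: closed under restriction. -/
def IsTree (T : List B → Prop) : Prop := ∀ u a, T (u ++ [a]) → T u
/-- `T` is monotone: closed under extension. -/
def IsMono (T : List B → Prop) : Prop := ∀ u a, T u → T (u ++ [a])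
/-- Downwards arborification `⌊T⌋`. -/
def DownArbor (T : List B → Prop) : List B → Prop := fun u => ∀ u', u' <+: u → T u'
/-- Upwards monotonisation `⌈T⌉`. -/
def UpMonot (T : List B → Prop) : List B → Prop := fun u => ∃ u', u' <+: u ∧ T u'
def UnboundedPaths (T : List B → Prop) : Prop := ∀ n, ∃ u, u.length = n ∧ DownArbor T u
def StagedInfinite (T : List B → Prop) : Prop := ∀ n, ∃ u : List B, u.length = n ∧ T u
def UniformlyBarred (T : List B → Prop) : Prop := ∃ n, ∀ u : List B, u.length = n → UpMonot T u
def StagedBarred (T : List B → Prop) : Prop := ∃ n, ∀ u : List B, u.length = n → T u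

/-- `u` is in the pruning of `T` (coinductive/greatest fixed point, impredicative encoding). -/
def Pruning (T : List B → Prop) (u : List B) : Prop :=
  ∃ X : List B → Prop, X u ∧ ∀ v, X v → T v ∧ ∃ a, X (v ++ [a])
def Productive (T : List B → Prop) : Prop := Pruning T []

/-- Hereditary closure of `T` (least fixed point). -/
inductive HerClos (T : List B → Prop) : List B → Prop
  | base (u : List B) : T u → HerClos T u
  | step (u : List B) : (∀ a, HerClos T (u ++ [a])) → HerClos T u

def IndBarred (T : List B → Prop) : Prop := HerClos T []
def Spread (T : List B → Prop) : Prop := T [] ∧ ∀ u, T u → ∃ a, T (u ++ [a])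
def Hereditary (T : List B → Prop) : Prop := ∀ u, (∀ a, T (u ++ [a])) → T u
def Barricaded (T : List B → Prop) : Prop := Hereditary T → T []
def InfBranch (T : List B → Prop) : Prop := ∃ α : ℕ → B, ∀ u, SeqPrefix u α → T u
def Barred (T : List B → Prop) : Prop := ∀ α : ℕ → B, ∃ u, SeqPrefix u α ∧ T u

/- Finite approximations of functions: sequences of pairs. -/

/-- `v ⊆ v'` : every pair occurring in `v` occurs in `v'`. -/
def PSub (v v' : List (A × B)) : Prop := ∀ x, x ∈ v → x ∈ v'
/-- `a` is in the domain of `w`. -/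
def InDom (w : List (A × B)) (a : A) : Prop := ∃ b, (a, b) ∈ w
/-- `T` is `A`-`B`-approximable from `v` (coinductive, impredicative encoding). -/
def ApproxFrom (T : List (A × B) → Prop) (v : List (A × B)) : Prop :=
  ∃ X : List (A × B) → Prop, X v ∧
    ∀ w, X w → ((∀ v', PSub v' w → T v') ∧ ∀ a, ¬ InDom w a → ∃ b, X (w ++ [(a, b)]))
/-- `T` is `A`-`B`-approximable. -/
def Approximable (T : List (A × B) → Prop) : Prop := ApproxFrom T []

/-- `T` is inductively `A`-`B`-barred from a sequence (least fixed point). -/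
inductive IndPairBarred (T : List (A × B) → Prop) : List (A × B) → Prop
  | base (w : List (A × B)) : (∃ v, PSub v w ∧ T v) → IndPairBarred T w
  | step (w : List (A × B)) (a : A) : ¬ InDom w a →
      (∀ b, IndPairBarred T (w ++ [(a, b)])) → IndPairBarred T w

def InductivelyPairBarred (T : List (A × B) → Prop) : Prop := IndPairBarred T []
/-- `v ≺ α` : `α a = b` for every `(a,b) ∈ v`. -/
def PairPrefix (v : List (A × B)) (α : A → B) : Prop := ∀ p ∈ v, α p.1 = p.2
def PairChoiceFn (T : List (A × B) → Prop) : Prop := ∃ α : A → B, ∀ v, PairPrefix v α → T v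
def PairBarred (T : List (A × B) → Prop) : Prop := ∀ α : A → B, ∃ v, PairPrefix v α ∧ T v

/-- `ord u` pairs each element of `u` with its position. -/
def ordSeq (u : List B) : List (ℕ × B) := (List.range u.length).zip u
/-- `T̂` : the lift of a predicate on `B*` to `(ℕ × B)*`. -/
def hatT (T : List B → Prop) : List (ℕ × B) → Prop := fun v => ∃ u, T u ∧ v = ordSeq u
/-- `‖T‖` : the restriction of a predicate on `(ℕ × B)*` to sequential sequences. -/
def normT (T : List (ℕ × B) → Prop) : List B → Prop := fun u => T (ordSeq u)
/-- Upwards arborification w.r.t. `⊆`. -/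
def UpPairArbor (S : List (A × B) → Prop) : List (A × B) → Prop :=
  fun v => ∃ v', PSub v v' ∧ S v'
/-- Upwards monotonisation w.r.t. `⊆`. -/
def UpPairMonot (S : List (A × B) → Prop) : List (A × B) → Prop :=
  fun v => ∃ v', PSub v' v ∧ S v'

/-- Chaining `R*⊤(b)` : all steps in `u` from `b` are in `R`. -/
def Chaining (R : B → B → Prop) : B → List B → Prop
  | _, [] => True
  | b, b' :: u => R b b' ∧ Chaining R b' u

/-- Antichaining `R*⊥(b)`. -/
def Antichaining (R : B → B → Prop) : B → List B → Prop
  | _, [] => False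
  | b, b' :: u => R b b' ∨ Antichaining R b' u

/-- Positive alignment `R▷⊤(b₀)`. -/
def PosAlign (R : B → B → Prop) (b₀ : B) (u : List B) : Prop :=
  match u.reverse with
  | [] => True
  | [b] => R b₀ b
  | b' :: b :: _ => R b b'

/-- Blockings `R▷⊥(b₀)`. -/
def Blockings (R : B → B → Prop) (b₀ : B) (u : List B) : Prop :=
  match u.reverse with
  | [] => False
  | [b] => R b₀ b
  | b' :: b :: _ => R b b'

/-- Sequential positive alignment `R^ℕ⊤`. -/
def SeqPosAlign (R : ℕ → B → Prop) (u : List B) : Prop :=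
  match u.reverse with
  | [] => True
  | b :: v => R v.length b

/-- Sequential negative alignment `R^ℕ⊥`. -/
def SeqNegAlign (R : ℕ → B → Prop) (u : List B) : Prop :=
  match u.reverse with
  | [] => False
  | b :: v => R v.length b

end BarInd

/-! A spread inside `T` is exactly a witness `X` in the impredicative definition of the pruning,
and the hereditary closure is the least hereditary predicate containing `T`, so it lies inside
every hereditary `U ⊇ T`. -/

namespace BarInd

variable {B : Type*}

theorem productive_iff_exists_spread_le (T : List B → Prop) :
    Productive T ↔ ∃ U : List B → Prop, (∀ u, U u → T u) ∧ Spread U := by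
  constructor
  · rintro ⟨X, hX_nil, hX⟩
    exact ⟨X, fun u hu => (hX u hu).1, hX_nil, fun u hu => (hX u hu).2⟩
  · rintro ⟨U, hUT, hU_nil, hU_prog⟩
    exact ⟨U, hU_nil, fun v hv => ⟨hUT v hv, hU_prog v hv⟩⟩

theorem herClos_hereditary (T : List B → Prop) : Hereditary (HerClos T) :=
  HerClos.step

theorem HerClos.le_of_hereditary {T U : List B → Prop} (hTU : ∀ u, T u → U u)
    (hU : Hereditary U) {u : List B} (hu : HerClos T u) : U u := by
  induction hu with
  | base u hu => exact hTU u hu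
  | step u _ ih => exact hU u ih

theorem indBarred_iff_forall_barricaded (T : List B → Prop) :
    IndBarred T ↔ ∀ U : List B → Prop, (∀ u, T u → U u) → Barricaded U :=
  ⟨fun hT _ hTU hU => HerClos.le_of_hereditary hTU hU hT,
    fun h => h (HerClos T) HerClos.base (herClos_hereditary T)⟩

end BarInd

open BarInd in
theorem stmt4 {B : Type*} (T : List B → Prop) :
    (Productive T ↔ ∃ U : List B → Prop, (∀ u, U u → T u) ∧ Spread U) ∧
    (IndBarred T ↔ ∀ U : List B → Prop, (∀ u, T u → U u) → Barricaded U) :=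
  ⟨productive_iff_exists_spread_le T, indBarred_iff_forall_barricaded T⟩
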